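/- arXiv:cs/0309044 — 10 statements merged into one kernel-verified Lean document; each statement's English description precedes it below -/
import Mathlib

section
/- Let (V,E) be a finite directed graph. Define the live vertices as the least subset L of V containing every sink and closed under the rule: if some out-neighbor of v belongs to L, then v belongs to L. Then some vertex of V is not live if and only if (V,E) contains a knot. (Holt's theorem: in the OR model, a deadlock exists in the wait-for graph W if and only if W contains a knot.) -/
variable {V : Type*}

/-- The live vertices in the OR model: the least subset of `V` containing every sink
and closed under the rule that if some out-neighbor of `v` is live, then `v` is live. -/
inductive OrLive (E : V → V → Prop) : V → Prop
  | sink (v : V) (h : ∀ u, ¬ E v u) : OrLive E v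
  | step (v u : V) (h : E v u) (hu : OrLive E u) : OrLive E v

/-- The reachability set of `v`: all vertices reachable from `v` by a directed path
(possibly of length 0). -/
def ReachSet (E : V → V → Prop) (v : V) : Set V := {w | Relation.ReflTransGen E v w}

/-- A knot: a set `S` of at least two vertices such that the reachability set of every
vertex of `S` equals `S`. -/
def IsKnot (E : V → V → Prop) (S : Set V) : Prop :=
  (∃ a ∈ S, ∃ b ∈ S, a ≠ b) ∧ ∀ v ∈ S, ReachSet E v = S

/-- Holt's theorem: in the OR model, a deadlock exists in the wait-for graph if and
only if it contains a knot. -/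
theorem or_model_deadlock_iff_knot [Fintype V]
    (E : V → V → Prop) (hirr : Irreflexive E) :
    (∃ v, ¬ OrLive E v) ↔ ∃ S : Set V, IsKnot E S := by
  classical
  have hsucc : ∀ v, ¬ OrLive E v → ∃ u, E v u ∧ ¬ OrLive E u := by
    intro v hv
    by_contra h
    push_neg at h
    by_cases hs : ∃ u, E v u
    · obtain ⟨u, hu⟩ := hs
      exact hv (OrLive.step v u hu (h u hu))
    · push_neg at hs
      exact hv (OrLive.sink v hs)
  have hreach : ∀ v w, ¬ OrLive E v → Relation.ReflTransGen E v w → ¬ OrLive E w := by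
    intro v w hv hvw
    induction hvw with
    | refl => exact hv
    | tail _ hbc ih => exact fun hc => ih (OrLive.step _ _ hbc hc)
  constructor
  · rintro ⟨v, hv⟩
    -- pick a dead vertex with minimal reach set cardinality
    obtain ⟨m, hm, hmin⟩ := Finset.exists_min_image
      (Finset.univ.filter (fun w => ¬ OrLive E w)) (fun w => (ReachSet E w).ncard)
      ⟨v, by simp [hv]⟩
    simp only [Finset.mem_filter, Finset.mem_univ, true_and] at hm hmin
    refine ⟨ReachSet E m, ?_, ?_⟩
    · obtain ⟨u, hmu, _⟩ := hsucc m hm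
      exact ⟨m, Relation.ReflTransGen.refl, u, Relation.ReflTransGen.single hmu,
        fun h => hirr m (h ▸ hmu)⟩
    · intro w hw
      have hwdead : ¬ OrLive E w := hreach m w hm hw
      have hsub : ReachSet E w ⊆ ReachSet E m := fun x hx => hw.trans hx
      exact Set.eq_of_subset_of_ncard_le hsub
        (hmin w (by simpa using hwdead)) (Set.toFinite _)
  · rintro ⟨S, ⟨a, ha, b, hb, hab⟩, hS⟩
    refine ⟨a, fun hlive => ?_⟩
    -- any live vertex is not in S
    have : ∀ w, OrLive E w → w ∉ S := by
      intro w hw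
      induction hw with
      | sink v h =>
        intro hvS
        have hba : b ∈ ReachSet E v := (hS v hvS).symm ▸ hb
        have haa : a ∈ ReachSet E v := (hS v hvS).symm ▸ ha
        have hone : ∀ x, x ∈ ReachSet E v → x = v := by
          intro x hx
          cases (Relation.reflTransGen_iff_eq (fun u hu => h u hu)).mp hx
          rfl
        exact hab ((hone a haa).trans (hone b hba).symm)
      | step v u hvu _ ih =>
        intro hvS
        exact ih ((hS v hvS).symm ▸ (Relation.ReflTransGen.single hvu : u ∈ ReachSet E v))
    exact this a hlive ha
end

section
/- Let (V,E) be a finite directed graph, for each vertex v let y_v be its out-degree, and let x_v be a natural number with 0 ≤ x_v ≤ y_v and with x_v ≥ 1 whenever y_v ≥ 1. Define the live vertices as the least subset L of V closed under the rule: if at least x_v of the out-neighbors of v belong to L, then v belongs to L (in particular, every sink is live, since x_v = 0 for sinks). Then some vertex of V is not live if and only if there exists a nonempty set S ⊆ V such that every v ∈ S has strictly more than y_v − x_v out-neighbors inside S. (In the x-out-of-y model, a deadlock exists in the wait-for graph W if and only if W contains a (y−x)-knot.) -/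
variable {V : Type*}

/-- The live vertices in the x-out-of-y model: the least subset `L` of `V` closed under
the rule that if at least `x v` of the out-neighbors of `v` belong to `L`, then `v`
belongs to `L` (witnessed by a finset `T` of live out-neighbors of cardinality at
least `x v`). -/
inductive XYLive (E : V → V → Prop) (x : V → ℕ) : V → Prop
  | intro (v : V) (T : Finset V) (hsub : ∀ u ∈ T, E v u) (hcard : x v ≤ T.card)
      (hlive : ∀ u ∈ T, XYLive E x u) : XYLive E x v

/-- In the x-out-of-y model, a deadlock exists in the wait-for graph if and only if it
contains a (y−x)-knot: a nonempty set `S` of vertices such that every `v ∈ S` has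
strictly more than `y v - x v` out-neighbors inside `S`. -/
theorem xy_model_deadlock_iff_yx_knot [Fintype V] [DecidableEq V]
    (E : V → V → Prop) [DecidableRel E] (hirr : Irreflexive E)
    (x y : V → ℕ)
    (hy : ∀ v, y v = (Finset.univ.filter (fun u => E v u)).card)
    (hxle : ∀ v, x v ≤ y v) (hxpos : ∀ v, 1 ≤ y v → 1 ≤ x v) :
    (∃ v, ¬ XYLive E x v) ↔
      ∃ S : Finset V, S.Nonempty ∧
        ∀ v ∈ S, y v - x v < (S.filter (fun u => E v u)).card := by
  classical
  constructor
  · rintro ⟨v, hv⟩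
    refine ⟨Finset.univ.filter (fun u => ¬ XYLive E x u), ⟨v, by simp [hv]⟩, ?_⟩
    intro w hw
    simp only [Finset.mem_filter, Finset.mem_univ, true_and] at hw
    set L := Finset.univ.filter (fun u => E w u ∧ XYLive E x u) with hL
    have hLcard : L.card < x w := by
      by_contra h
      push_neg at h
      exact hw (XYLive.intro w L (fun u hu => (Finset.mem_filter.1 hu).2.1) h
        (fun u hu => (Finset.mem_filter.1 hu).2.2))
    have hsplit : L.card +
        ((Finset.univ.filter (fun u => ¬ XYLive E x u)).filter (fun u => E w u)).card
        = y w := by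
      rw [hy w]
      have h1 : L = (Finset.univ.filter (fun u => E w u)).filter (fun u => XYLive E x u) := by
        ext u; simp [hL, and_comm]
      have h2 : (Finset.univ.filter (fun u => ¬ XYLive E x u)).filter (fun u => E w u)
          = (Finset.univ.filter (fun u => E w u)).filter (fun u => ¬ XYLive E x u) := by
        ext u; simp [and_comm]
      rw [h1, h2, Finset.card_filter_add_card_filter_not]
    have := hxle w
    omega
  · rintro ⟨S, ⟨v0, hv0⟩, hknot⟩
    have key : ∀ v, XYLive E x v → v ∉ S := by
      intro v hv
      induction hv with
      | intro v T hsub hcard hlive ih =>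
        intro hvS
        have hdis : Disjoint T (S.filter (fun u => E v u)) := by
          rw [Finset.disjoint_left]
          intro u huT huS
          exact ih u huT (Finset.mem_filter.1 huS).1
        have hsubN : T ∪ S.filter (fun u => E v u) ⊆ Finset.univ.filter (fun u => E v u) := by
          intro u hu
          simp only [Finset.mem_union, Finset.mem_filter] at hu ⊢
          rcases hu with h | h
          · exact ⟨Finset.mem_univ u, hsub u h⟩
          · exact ⟨Finset.mem_univ u, h.2⟩
        have hle := Finset.card_le_card hsubN
        rw [Finset.card_union_of_disjoint hdis] at hle
        have hk := hknot v hvS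
        have h1 := hy v
        have h2 := hxle v
        omega
    exact ⟨v0, fun h => key v0 h hv0⟩
end

section
/- Let V be a finite vertex set where each vertex v carries a finite family F_v of nonempty subsets of V \ {v} (its wait bundles), with F_v = ∅ meaning v is not waiting. Define the live vertices as the least subset L of V closed under the rule: if F_v = ∅, or some A ∈ F_v satisfies A ⊆ L, then v belongs to L. Then some vertex of V is not live if and only if there exists a b-knot. (In the AND-OR model, a deadlock exists in the wait-for graph W if and only if W contains a b-knot.) -/
variable {V : Type*}

/-- The live vertices in the AND-OR model: the least subset `L` of `V` closed under the
rule that if `F v = ∅` (the vertex is not waiting), or some bundle `A ∈ F v` satisfies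
`A ⊆ L`, then `v` belongs to `L`. -/
inductive AOLive (F : V → Finset (Finset V)) : V → Prop
  | notWaiting (v : V) (h : F v = ∅) : AOLive F v
  | bundle (v : V) (A : Finset V) (hA : A ∈ F v) (h : ∀ u ∈ A, AOLive F u) : AOLive F v

/-- A b-subgraph: a choice, for each vertex `v`, of an out-neighborhood
`O' v ⊆ ⋃ (F v)` meeting every bundle `A ∈ F v`. -/
def IsBSubgraph (F : V → Finset (Finset V)) (O' : V → Finset V) : Prop :=
  ∀ v, (∀ u ∈ O' v, ∃ A ∈ F v, u ∈ A) ∧ (∀ A ∈ F v, ∃ u ∈ O' v, u ∈ A)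

/-- A b-knot exists when some b-subgraph contains a knot. -/
def HasBKnot (F : V → Finset (Finset V)) : Prop :=
  ∃ O' : V → Finset V, IsBSubgraph F O' ∧
    ∃ S : Set V, IsKnot (fun u w => w ∈ O' u) S

/-- In the AND-OR model, a deadlock exists in the wait-for graph if and only if it
contains a b-knot. -/
theorem andor_model_deadlock_iff_bknot [Fintype V]
    (F : V → Finset (Finset V))
    (hF : ∀ v, ∀ A ∈ F v, A.Nonempty ∧ v ∉ A) :
    (∃ v, ¬ AOLive F v) ↔ HasBKnot F := by
  classical
  constructor
  · rintro ⟨v₀, hv₀⟩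
    have hD : ∀ v, ¬ AOLive F v → (F v).Nonempty ∧ ∀ A ∈ F v, ∃ u ∈ A, ¬ AOLive F u := by
      intro v hv
      refine ⟨Finset.nonempty_iff_ne_empty.mpr fun h => hv (AOLive.notWaiting v h), ?_⟩
      intro A hA
      by_contra h
      push_neg at h
      exact hv (AOLive.bundle v A hA h)
    have pickspec : ∀ v : V, ∀ A ∈ F v, ∃ u, u ∈ A ∧ (¬ AOLive F v → ¬ AOLive F u) := by
      intro v A hA
      by_cases hv : AOLive F v
      · obtain ⟨u, hu⟩ := (hF v A hA).1
        exact ⟨u, hu, fun h => absurd hv h⟩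
      · obtain ⟨u, hu, hu'⟩ := (hD v hv).2 A hA
        exact ⟨u, hu, fun _ => hu'⟩
    choose pick hpick1 hpick2 using pickspec
    set O' : V → Finset V := fun v => (F v).attach.image fun A => pick v A.1 A.2 with hO'def
    have hsub : IsBSubgraph F O' := by
      intro v
      constructor
      · intro u hu
        simp only [hO'def, Finset.mem_image, Finset.mem_attach, true_and] at hu
        obtain ⟨⟨A, hA⟩, rfl⟩ := hu
        exact ⟨A, hA, hpick1 v A hA⟩
      · intro A hA
        refine ⟨pick v A hA, ?_, hpick1 v A hA⟩
        simp only [hO'def, Finset.mem_image]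
        exact ⟨⟨A, hA⟩, Finset.mem_attach _ _, rfl⟩
    set E : V → V → Prop := fun u w => w ∈ O' u with hEdef
    have hedge : ∀ v, ¬ AOLive F v → ∀ w, E v w → ¬ AOLive F w := by
      intro v hv w hw
      simp only [hEdef, hO'def, Finset.mem_image, Finset.mem_attach, true_and] at hw
      obtain ⟨⟨A, hA⟩, rfl⟩ := hw
      exact hpick2 v A hA hv
    have hreach : ∀ v w, Relation.ReflTransGen E v w → ¬ AOLive F v → ¬ AOLive F w := by
      intro v w h
      induction h with
      | refl => exact id
      | tail _ h2 ih => exact fun hv => hedge _ (ih hv) _ h2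
    set r : V → ℕ := fun v => (Finset.univ.filter fun w => Relation.ReflTransGen E v w).card
      with hrdef
    obtain ⟨v, hvD, hmin⟩ := Finset.exists_min_image
      (Finset.univ.filter fun v => ¬ AOLive F v) r
      ⟨v₀, by simpa using hv₀⟩
    simp only [Finset.mem_filter, Finset.mem_univ, true_and] at hvD
    refine ⟨O', hsub, ReachSet E v, ?_, ?_⟩
    · obtain ⟨A, hA⟩ := (hD v hvD).1
      refine ⟨v, Relation.ReflTransGen.refl, pick v A hA, Relation.ReflTransGen.single ?_, ?_⟩
      · simp only [hEdef, hO'def, Finset.mem_image]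
        exact ⟨⟨A, hA⟩, Finset.mem_attach _ _, rfl⟩
      · intro h
        exact (hF v A hA).2 (h ▸ hpick1 v A hA)
    · intro w hw
      have hwD : ¬ AOLive F w := hreach v w hw hvD
      have hsubset : ∀ x, Relation.ReflTransGen E w x → Relation.ReflTransGen E v x :=
        fun x hx => Relation.ReflTransGen.trans hw hx
      have hle : r v ≤ r w := hmin w (by simpa using hwD)
      have hfs : (Finset.univ.filter fun x => Relation.ReflTransGen E w x) ⊆
          (Finset.univ.filter fun x => Relation.ReflTransGen E v x) := by
        intro x hx
        simp only [Finset.mem_filter, Finset.mem_univ, true_and] at hx ⊢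
        exact hsubset x hx
      have heq := Finset.eq_of_subset_of_card_le hfs hle
      ext x
      constructor
      · intro hx
        exact hsubset x hx
      · intro hx
        have hx' : x ∈ (Finset.univ.filter fun y => Relation.ReflTransGen E w y) := by
          rw [heq]
          simp only [Finset.mem_filter, Finset.mem_univ, true_and]
          exact hx
        exact (Finset.mem_filter.mp hx').2
  · rintro ⟨O', hO', S, ⟨a, haS, b, hbS, hab⟩, hS⟩
    have key : ∀ v, AOLive F v → v ∉ S := by
      intro v hv
      induction hv with
      | notWaiting v h =>
        intro hvS
        have ha' : a ∈ ReachSet (fun u w => w ∈ O' u) v := (hS v hvS).symm ▸ haS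
        have hb' : b ∈ ReachSet (fun u w => w ∈ O' u) v := (hS v hvS).symm ▸ hbS
        have hc : ∃ c, c ∈ O' v := by
          rcases Relation.ReflTransGen.cases_head ha' with h1 | ⟨c, hc, _⟩
          · rcases Relation.ReflTransGen.cases_head hb' with h2 | ⟨c, hc, _⟩
            · exact absurd (h1.symm.trans h2) hab
            · exact ⟨c, hc⟩
          · exact ⟨c, hc⟩
        obtain ⟨c, hc⟩ := hc
        obtain ⟨A, hA, _⟩ := (hO' v).1 c hc
        simp [h] at hA
      | bundle v A hA h ih =>
        intro hvS
        obtain ⟨u, huO, huA⟩ := (hO' v).2 A hA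
        have huS : u ∈ S := (hS v hvS) ▸ Relation.ReflTransGen.single huO
        exact ih u huA huS
    exact ⟨a, fun h => key a h haS⟩
end

section
/- Let (V,E) be a finite directed graph with no directed cycle, and let S be a set of sinks of (V,E). Let E' be obtained from E by reversing every edge incident to a vertex of S: E' has an edge u→v exactly when either u→v ∈ E and v ∉ S, or v→u ∈ E and u ∈ S. Then (V,E') has no directed cycle. (If ω is an acyclic orientation and ω' results from simultaneously turning any collection of sinks of ω into sources, then ω' is acyclic.) -/
variable {V : Type*}

/-- If `(V, E)` is a finite acyclic directed graph, `S` is a set of sinks of `(V, E)`,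
and `E'` is obtained from `E` by reversing every edge incident to a vertex of `S`
(an edge `u → v` is in `E'` iff either `u → v ∈ E` and `v ∉ S`, or `v → u ∈ E` and
`u ∈ S`), then `(V, E')` has no directed cycle. -/
theorem reverse_sinks_acyclic [Fintype V]
    (E : V → V → Prop) (hirr : Irreflexive E)
    (hacy : ∀ v, ¬ Relation.TransGen E v v)
    (S : Set V) (hS : ∀ v ∈ S, ∀ u, ¬ E v u)
    (E' : V → V → Prop)
    (hE' : ∀ u v, E' u v ↔ (E u v ∧ v ∉ S) ∨ (E v u ∧ u ∈ S)) :
    ∀ v, ¬ Relation.TransGen E' v v := by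
  have key : ∀ a b, Relation.TransGen E' a b →
      b ∉ S ∧ (a ∉ S → Relation.TransGen E a b) := by
    intro a b h
    induction h with
    | single h =>
      rcases (hE' _ _).1 h with ⟨hE, hns⟩ | ⟨hE, hs⟩
      · exact ⟨hns, fun _ => Relation.TransGen.single hE⟩
      · exact ⟨fun hb => hS _ hb _ hE, fun ha => absurd hs ha⟩
    | tail _ h ih =>
      rcases (hE' _ _).1 h with ⟨hE, hns⟩ | ⟨_, hs⟩
      · exact ⟨hns, fun ha => (ih.2 ha).tail hE⟩
      · exact absurd hs ih.1
  intro v hv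
  exact hacy v ((key v v hv).2 (key v v hv).1)
end

section
/- Let G be a finite connected simple graph with at least one vertex and let ω0 be an acyclic orientation of G. Then for every s ≥ 0, the orientation ω_s produced by s synchronous edge-reversal steps is acyclic and has at least one sink. (Every edge-reversal computation is deadlock-free: at every step at least one process may compute on its shared resources.) -/
variable {V : Type*}

/-- `o` is an orientation of the simple graph `G`: it assigns a direction to each
edge of `G` (for adjacent `u, v`, exactly one of `o u v`, `o v u` holds) and relates
no other pairs. -/
def IsOrientation (G : SimpleGraph V) (o : V → V → Prop) : Prop :=
  ∀ u v, (o u v → G.Adj u v) ∧ (G.Adj u v → (o u v ↔ ¬ o v u))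

/-- A sink of an orientation: a vertex with no outgoing edge (every incident edge is
directed toward it). -/
def IsSink (o : V → V → Prop) (v : V) : Prop := ∀ u, ¬ o v u

/-- A directed graph (or orientation) is acyclic when it has no directed cycle. -/
def DirAcyclic (o : V → V → Prop) : Prop := ∀ v, ¬ Relation.TransGen o v v

/-- The synchronous edge-reversal step: every edge incident to a sink is reversed
(every sink becomes a source); all other edges keep their direction. -/
def revStep (o : V → V → Prop) : V → V → Prop :=
  fun u v => (o u v ∧ ¬ IsSink o v) ∨ (o v u ∧ IsSink o u)

/-- The sequence of orientations produced by synchronous edge reversal: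
`orientSeq ω0 s` is the result of `s` edge-reversal steps applied to `ω0`. -/
def orientSeq (ω0 : V → V → Prop) (s : ℕ) : V → V → Prop := revStep^[s] ω0

private lemma sink_no_in {o : V → V → Prop} {u w : V} (hu : IsSink o u) :
    ¬ revStep o w u := by
  rintro (⟨ho, hn⟩ | ⟨ho, hs⟩)
  · exact hn hu
  · exact hu w ho

private lemma trans_chain {o : V → V → Prop} {a b : V}
    (h : Relation.TransGen (revStep o) a b) (ha : ¬ IsSink o a) :
    Relation.TransGen o a b ∧ ¬ IsSink o b := by
  induction h with
  | single hab =>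
      rename_i b
      have hb : ¬ IsSink o b := fun hb => sink_no_in hb hab
      rcases hab with ⟨ho, _⟩ | ⟨_, hs⟩
      · exact ⟨Relation.TransGen.single ho, hb⟩
      · exact absurd hs ha
  | tail hab hbc ih =>
      rename_i b' c'
      obtain ⟨htr, hb'⟩ := ih
      have hc : ¬ IsSink o c' := fun hc => sink_no_in hc hbc
      rcases hbc with ⟨ho, _⟩ | ⟨_, hs⟩
      · exact ⟨htr.tail ho, hc⟩
      · exact absurd hs hb'

private lemma revStep_acyclic {o : V → V → Prop} (h : DirAcyclic o) :
    DirAcyclic (revStep o) := by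
  intro v hv
  have hvs : ¬ IsSink o v := by
    obtain ⟨w, -, hw⟩ := Relation.TransGen.tail'_iff.mp hv
    exact fun hs => sink_no_in hs hw
  exact h v (trans_chain hv hvs).1

private lemma exists_sink [Fintype V] [Nonempty V] {o : V → V → Prop}
    (h : DirAcyclic o) : ∃ v, IsSink o v := by
  let r : V → V → Prop := fun a b => Relation.TransGen o b a
  haveI : IsTrans V r := ⟨fun a b c hab hbc => hbc.trans hab⟩
  haveI : IsIrrefl V r := ⟨fun a ha => h a ha⟩
  obtain ⟨v, -, hmin⟩ := (Finite.wellFounded_of_trans_of_irrefl r).has_min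
    Set.univ ⟨Classical.arbitrary V, trivial⟩
  exact ⟨v, fun u hu => hmin u trivial (Relation.TransGen.single hu)⟩

/-- Every edge-reversal computation is deadlock-free: starting from an acyclic
orientation `ω0` of a finite connected simple graph with at least one vertex, every
orientation `ω_s` produced by `s` synchronous edge-reversal steps is acyclic and has
at least one sink. -/
theorem edge_reversal_deadlock_free [Fintype V] [Nonempty V]
    (G : SimpleGraph V) (hG : G.Connected)
    (ω0 : V → V → Prop) (hor : IsOrientation G ω0) (hacy : DirAcyclic ω0) :
    ∀ s : ℕ, DirAcyclic (orientSeq ω0 s) ∧ ∃ v, IsSink (orientSeq ω0 s) v := by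
  intro s
  induction s with
  | zero => exact ⟨hacy, exists_sink hacy⟩
  | succ n ih =>
      have heq : orientSeq ω0 (n + 1) = revStep (orientSeq ω0 n) := by
        simp [orientSeq, Function.iterate_succ_apply']
      have hac : DirAcyclic (orientSeq ω0 (n + 1)) := by
        rw [heq]; exact revStep_acyclic ih.1
      exact ⟨hac, exists_sink hac⟩
end

section
/- Let G be a finite connected simple graph on n vertices and ω0 an acyclic orientation of G. For a vertex v, let d(v) be the number of edges of a longest directed path starting at v in ω0. Then v is a sink of ω_s for some s ≤ d(v); in particular, every vertex of G becomes a sink within the first n − 1 edge-reversal steps. (Every edge-reversal computation is starvation-free, and the worst-case wait a process must undergo is O(n).) -/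
variable {V : Type*}

/-!
Write `PathsBoundedBy ω v D` for "every directed path of `ω` starting at `v` has at most
`D` edges". If `v` is not a sink of `ω`, a path of `revStep ω` starting at `v` never uses
a reversed edge, because a reversed edge leaves a sink of `ω` and every vertex of the path
is a non-sink of `ω`. So it is a path of `ω` ending at a non-sink, and it extends by one
more edge; hence the bound drops by one after each step until `v` is a sink. In an acyclic
orientation a path repeats no vertex, so `D = n - 1` is always a bound.
-/

def PathsBoundedBy (ω : V → V → Prop) (v : V) (D : ℕ) : Prop :=
  ∀ (f : ℕ → V) (k : ℕ), f 0 = v → (∀ i < k, ω (f i) (f (i + 1))) → k ≤ D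

section

variable {ω : V → V → Prop}

lemma IsSink.of_pathsBoundedBy_zero {v : V} (h : PathsBoundedBy ω v 0) : IsSink ω v := by
  intro u hu
  have := h (fun i => if i = 0 then v else u) 1 rfl (by simpa using hu)
  omega

lemma revStep_of_not_isSink {u w : V} (hu : ¬ IsSink ω u) (h : revStep ω u w) :
    ω u w ∧ ¬ IsSink ω w :=
  h.resolve_right fun h' => hu h'.2

lemma exists_path_succ_of_not_isSink {f : ℕ → V} {k : ℕ}
    (hf : ∀ i < k, ω (f i) (f (i + 1))) (hk : ¬ IsSink ω (f k)) :
    ∃ g : ℕ → V, g 0 = f 0 ∧ ∀ i < k + 1, ω (g i) (g (i + 1)) := by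
  obtain ⟨y, hy⟩ := not_forall_not.mp hk
  refine ⟨fun i => if i ≤ k then f i else y, by simp, fun i hi => ?_⟩
  by_cases hik : i + 1 ≤ k
  · simpa [hik, show i ≤ k by omega] using hf i hik
  · obtain rfl : i = k := by omega
    simpa using hy

lemma PathsBoundedBy.revStep {v : V} {D : ℕ} (h : PathsBoundedBy ω v (D + 1))
    (hv : ¬ IsSink ω v) : PathsBoundedBy (revStep ω) v D := by
  intro f k hf0 hf
  have hns : ∀ i ≤ k, ¬ IsSink ω (f i) := by
    intro i hi
    induction i with
    | zero => rwa [hf0]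
    | succ i ih => exact (revStep_of_not_isSink (ih (by omega)) (hf i hi)).2
  have hold : ∀ i < k, ω (f i) (f (i + 1)) := fun i hi =>
    (revStep_of_not_isSink (hns i hi.le) (hf i hi)).1
  obtain ⟨g, hg0, hg⟩ := exists_path_succ_of_not_isSink hold (hns k le_rfl)
  have := h g (k + 1) (hg0.trans hf0) hg
  omega

theorem exists_isSink_orientSeq_of_pathsBoundedBy {v : V} {D : ℕ}
    (h : PathsBoundedBy ω v D) : ∃ s ≤ D, IsSink (orientSeq ω s) v := by
  induction D generalizing ω with
  | zero => exact ⟨0, le_rfl, IsSink.of_pathsBoundedBy_zero h⟩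
  | succ D ih =>
    by_cases hv : IsSink ω v
    · exact ⟨0, D.succ.zero_le, hv⟩
    · obtain ⟨s, hs, hsink⟩ := ih (h.revStep hv)
      exact ⟨s + 1, by omega, by rwa [orientSeq, Function.iterate_succ_apply]⟩

lemma transGen_of_forall_lt_succ {f : ℕ → V} {k : ℕ} (hf : ∀ i < k, ω (f i) (f (i + 1)))
    {i j : ℕ} (hij : i < j) (hjk : j ≤ k) : Relation.TransGen ω (f i) (f j) := by
  induction j, hij using Nat.le_induction with
  | base => exact .single (hf i hjk)
  | succ j _ ih => exact (ih (by omega)).tail (hf j hjk)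

lemma DirAcyclic.pathsBoundedBy_card_sub_one [Fintype V] (hω : DirAcyclic ω) (v : V) :
    PathsBoundedBy ω v (Fintype.card V - 1) := by
  intro f k _ hf
  have hinj : ∀ i j, i < j → j ≤ k → f i ≠ f j := fun i j hij hjk heq => by
    have hcycle := transGen_of_forall_lt_succ hf hij hjk
    rw [heq] at hcycle
    exact hω (f j) hcycle
  by_contra! hk
  obtain ⟨a, b, hab, heq⟩ := Fintype.exists_ne_map_eq_of_card_lt
    (fun i : Fin (k + 1) => f i) (by simp only [Fintype.card_fin]; omega)
  rcases Fin.lt_or_lt_of_ne hab with hlt | hlt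
  · exact hinj a b hlt (Nat.lt_succ_iff.mp b.2) heq
  · exact hinj b a hlt (Nat.lt_succ_iff.mp a.2) heq.symm

end

theorem edge_reversal_starvation_free_general [Fintype V]
    (ω0 : V → V → Prop) (hacy : DirAcyclic ω0)
    (v : V) (d : ℕ)
    (hbound : ∀ (f : ℕ → V) (k : ℕ), f 0 = v →
      (∀ i < k, ω0 (f i) (f (i + 1))) → k ≤ d) :
    (∃ s ≤ d, IsSink (orientSeq ω0 s) v) ∧
      ∀ u : V, ∃ s ≤ Fintype.card V - 1, IsSink (orientSeq ω0 s) u :=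
  ⟨exists_isSink_orientSeq_of_pathsBoundedBy hbound,
    fun u => exists_isSink_orientSeq_of_pathsBoundedBy (hacy.pathsBoundedBy_card_sub_one u)⟩

/-- Every edge-reversal computation is starvation-free, with worst-case wait `O(n)`:
if `d` is the number of edges of a longest directed path starting at `v` in the
acyclic orientation `ω0` of the finite connected simple graph `G` on `n` vertices,
then `v` is a sink of `ω_s` for some `s ≤ d`; in particular every vertex becomes a
sink within the first `n - 1` edge-reversal steps. -/
theorem edge_reversal_starvation_free [Fintype V]
    (G : SimpleGraph V) (hG : G.Connected)
    (ω0 : V → V → Prop) (hor : IsOrientation G ω0) (hacy : DirAcyclic ω0)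
    (v : V) (d : ℕ)
    (hbound : ∀ (f : ℕ → V) (k : ℕ), f 0 = v →
      (∀ i < k, ω0 (f i) (f (i + 1))) → k ≤ d)
    (hattained : ∃ f : ℕ → V, f 0 = v ∧ ∀ i < d, ω0 (f i) (f (i + 1))) :
    (∃ s ≤ d, IsSink (orientSeq ω0 s) v) ∧
      ∀ u : V, ∃ s ≤ Fintype.card V - 1, IsSink (orientSeq ω0 s) u :=
  edge_reversal_starvation_free_general ω0 hacy v d hbound
end

section
/- If a finite simple graph H admits a proper vertex coloring with c colors (adjacent vertices receive distinct colors), then H has an acyclic orientation in which every directed path has at most c − 1 edges. -/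
variable {V : Type*}

/-- If a finite simple graph admits a proper vertex coloring with `c` colors, then it
has an acyclic orientation in which every directed path has at most `c - 1` edges. -/
theorem colorable_acyclic_orientation_bounded_paths [Fintype V]
    (H : SimpleGraph V) (c : ℕ) (γ : V → Fin c)
    (hγ : ∀ u v, H.Adj u v → γ u ≠ γ v) :
    ∃ o : V → V → Prop, IsOrientation H o ∧ DirAcyclic o ∧
      ∀ (f : ℕ → V) (k : ℕ), (∀ i < k, o (f i) (f (i + 1))) → k ≤ c - 1 := by
  refine ⟨fun u v => H.Adj u v ∧ γ u < γ v, ?_, ?_, ?_⟩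
  · intro u v
    refine ⟨fun h => h.1, fun hadj => ?_⟩
    have hne := hγ u v hadj
    constructor
    · rintro ⟨-, hlt⟩ ⟨-, hlt'⟩
      exact absurd (le_of_lt hlt) (not_le.2 hlt')
    · intro h
      refine ⟨hadj, ?_⟩
      rcases lt_or_gt_of_ne hne with h1 | h1
      · exact h1
      · exact absurd ⟨hadj.symm, h1⟩ h
  · intro v hv
    have : ∀ a b, Relation.TransGen (fun u v => H.Adj u v ∧ γ u < γ v) a b → γ a < γ b := by
      intro a b h
      induction h with
      | single h => exact h.2
      | tail _ h ih => exact ih.trans h.2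
    exact lt_irrefl _ (this v v hv)
  · intro f k hf
    have key : ∀ i ≤ k, i ≤ (γ (f i)).val := by
      intro i hi
      induction i with
      | zero => exact Nat.zero_le _
      | succ n ih =>
        have h1 := ih (Nat.le_of_succ_le hi)
        have h2 : γ (f n) < γ (f (n + 1)) := (hf n (Nat.lt_of_succ_le hi)).2
        omega
    have := key k le_rfl
    have := (γ (f k)).isLt
    omega
end

section
/- Let G be a finite connected simple graph, ω0 an acyclic orientation of G, and s0 ≥ 0, p > 0 integers such that ω_{s+p} = ω_s for all s ≥ s0. Then all vertices are sinks equally often over a period: for any two vertices u and v of G, the number of indices s with s0 ≤ s < s0 + p such that u is a sink of ω_s equals the number of such indices for v. -/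
variable {V : Type*}

open scoped Classical

lemma revStep_isOrientation {G : SimpleGraph V} {o : V → V → Prop}
    (h : IsOrientation G o) : IsOrientation G (revStep o) := by
  intro u v
  constructor
  · rintro (⟨h1, _⟩ | ⟨h1, _⟩)
    · exact (h u v).1 h1
    · exact ((h v u).1 h1).symm
  · intro hadj
    have huv := (h u v).2 hadj
    have hvu := (h v u).2 hadj.symm
    by_cases hu : IsSink o u <;> by_cases hv : IsSink o v
    · exact absurd (hvu.2 (hu v)) (hv u)
    · have h1 : ¬ o u v := hu v
      have h2 : o v u := hvu.2 h1
      unfold revStep; tauto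
    · have h1 : ¬ o v u := hv u
      have h2 : o u v := huv.2 h1
      unfold revStep; tauto
    · unfold revStep; tauto

lemma orientSeq_succ (ω0 : V → V → Prop) (s : ℕ) :
    orientSeq ω0 (s + 1) = revStep (orientSeq ω0 s) :=
  Function.iterate_succ_apply' _ _ _

lemma orientSeq_isOrientation {G : SimpleGraph V} {ω0 : V → V → Prop}
    (h : IsOrientation G ω0) (s : ℕ) : IsOrientation G (orientSeq ω0 s) := by
  induction s with
  | zero => exact h
  | succ n ih => rw [orientSeq_succ]; exact revStep_isOrientation ih

lemma step_count {G : SimpleGraph V} {o : V → V → Prop}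
    (h : IsOrientation G o) {u v : V} (hadj : G.Adj u v) :
    (if revStep o u v then (1 : ℤ) else 0) =
      (if o u v then 1 else 0) + (if IsSink o u then 1 else 0)
        - (if IsSink o v then 1 else 0) := by
  have huv := (h u v).2 hadj
  have hvu := (h v u).2 hadj.symm
  by_cases hu : IsSink o u <;> by_cases hv : IsSink o v
  · exact absurd (hvu.2 (hu v)) (hv u)
  · have h1 : ¬ o u v := hu v
    have h2 : o v u := hvu.2 h1
    simp [revStep, hu, hv, h1, h2]
  · have h1 : ¬ o v u := hv u
    have h2 : o u v := huv.2 h1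
    simp [revStep, hu, hv, h1, h2]
  · by_cases h1 : o u v <;> simp [revStep, hu, hv, h1]

lemma telescope {G : SimpleGraph V} {ω0 : V → V → Prop}
    (hor : IsOrientation G ω0) {u v : V} (hadj : G.Adj u v) (s0 : ℕ) :
    ∀ n : ℕ, (if orientSeq ω0 (s0 + n) u v then (1 : ℤ) else 0) =
      (if orientSeq ω0 s0 u v then 1 else 0) +
        ∑ s ∈ Finset.Ico s0 (s0 + n),
          ((if IsSink (orientSeq ω0 s) u then (1 : ℤ) else 0)
            - (if IsSink (orientSeq ω0 s) v then 1 else 0)) := by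
  intro n
  induction n with
  | zero => simp
  | succ n ih =>
    rw [show s0 + (n + 1) = (s0 + n) + 1 from rfl, orientSeq_succ,
      step_count (orientSeq_isOrientation hor (s0 + n)) hadj,
      Finset.sum_Ico_succ_top (Nat.le_add_right s0 n), ih]
    ring

lemma adj_count_eq {G : SimpleGraph V} {ω0 : V → V → Prop}
    (hor : IsOrientation G ω0) {s0 p : ℕ}
    (hper : orientSeq ω0 (s0 + p) = orientSeq ω0 s0) {u v : V} (hadj : G.Adj u v) :
    {s ∈ Set.Ico s0 (s0 + p) | IsSink (orientSeq ω0 s) u}.ncard =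
      {s ∈ Set.Ico s0 (s0 + p) | IsSink (orientSeq ω0 s) v}.ncard := by
  have htel := telescope hor hadj s0 p
  rw [hper] at htel
  have hsum : ∑ s ∈ Finset.Ico s0 (s0 + p),
      (if IsSink (orientSeq ω0 s) u then (1 : ℤ) else 0) =
      ∑ s ∈ Finset.Ico s0 (s0 + p),
      (if IsSink (orientSeq ω0 s) v then (1 : ℤ) else 0) := by
    have := htel
    rw [Finset.sum_sub_distrib] at this
    linarith
  have hcast : ((Finset.Ico s0 (s0 + p)).filter
      (fun s => IsSink (orientSeq ω0 s) u)).card =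
      ((Finset.Ico s0 (s0 + p)).filter
      (fun s => IsSink (orientSeq ω0 s) v)).card := by
    have hu : ∑ s ∈ Finset.Ico s0 (s0 + p),
        (if IsSink (orientSeq ω0 s) u then (1 : ℤ) else 0) =
        (((Finset.Ico s0 (s0 + p)).filter
          (fun s => IsSink (orientSeq ω0 s) u)).card : ℤ) := Finset.sum_boole _ _
    have hv : ∑ s ∈ Finset.Ico s0 (s0 + p),
        (if IsSink (orientSeq ω0 s) v then (1 : ℤ) else 0) =
        (((Finset.Ico s0 (s0 + p)).filter
          (fun s => IsSink (orientSeq ω0 s) v)).card : ℤ) := Finset.sum_boole _ _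
    rw [hu, hv] at hsum
    exact_mod_cast hsum
  have he : ∀ w : V, {s ∈ Set.Ico s0 (s0 + p) | IsSink (orientSeq ω0 s) w} =
      ↑((Finset.Ico s0 (s0 + p)).filter (fun s => IsSink (orientSeq ω0 s) w)) := by
    intro w
    ext s
    simp [Set.mem_Ico]
  rw [he u, he v, Set.ncard_coe_finset, Set.ncard_coe_finset, hcast]

/-- The period lemma: in the eventual periodic part of an edge-reversal computation on
a finite connected simple graph, all vertices are sinks equally often over a period. -/
theorem edge_reversal_period_lemma [Fintype V]
    (G : SimpleGraph V) (hG : G.Connected)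
    (ω0 : V → V → Prop) (hor : IsOrientation G ω0) (hacy : DirAcyclic ω0)
    (s0 p : ℕ) (hp : 0 < p)
    (hper : ∀ s, s0 ≤ s → orientSeq ω0 (s + p) = orientSeq ω0 s)
    (u v : V) :
    {s ∈ Set.Ico s0 (s0 + p) | IsSink (orientSeq ω0 s) u}.ncard =
      {s ∈ Set.Ico s0 (s0 + p) | IsSink (orientSeq ω0 s) v}.ncard := by
  have hp0 : orientSeq ω0 (s0 + p) = orientSeq ω0 s0 := hper s0 le_rfl
  obtain ⟨w⟩ := hG.preconnected u v
  induction w with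
  | nil => rfl
  | cons hadj _ ih => exact (adj_count_eq hor hp0 hadj).trans ih
end

section
/- Let r_i and r_j be positive integers, g = gcd(r_i, r_j), and e = r_i + r_j − g. Define a sequence (a_s) of natural numbers by choosing a_0 to be a multiple of g with 0 ≤ a_0 ≤ e, and setting a_{s+1} = a_s − r_i if a_s ≥ r_i, and a_{s+1} = a_s + r_j otherwise. Then: (i) for every s, exactly one of the conditions a_s ≥ r_i and e − a_s ≥ r_j holds (deadlock-freedom: at each step exactly one endpoint is enabled); and (ii) the sequence is periodic with period (r_i + r_j)/g, and among any (r_i + r_j)/g consecutive steps the condition a_s ≥ r_i holds exactly r_j/g times and the condition e − a_s ≥ r_j holds exactly r_i/g times (ratio-compliance: the two endpoints obtain priority in the ratio r_j : r_i). -/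
/-!
The bead count `a s` stays a multiple of `g` in `[0, e]`: when `a s < r_i`, divisibility forces
`a s + g ≤ r_i`, so `P_j` can send `r_j` beads without overflowing, and this same gap of `g` is
what makes exactly one endpoint enabled. Each step changes `a s` by `r_j` modulo `r_i + r_j`,
and every step taken by `P_i` costs an extra `r_i + r_j`, so
`a (s + n) + (r_i + r_j) · #{P_i steps in [s, s + n)} = a s + n r_j`. For `n = (r_i + r_j)/g` the
right side is `a s + (r_i + r_j)(r_j/g)`; as both bead counts lie below `r_i + r_j`, this forces
`a (s + n) = a s` and `r_j/g` steps of `P_i`, hence `r_i/g` steps of `P_j`.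
-/

open Finset

def beadStep (ri rj x : ℕ) : ℕ := if ri ≤ x then x - ri else x + rj

section BeadStep

variable {ri rj g x : ℕ}

theorem add_le_of_dvd_of_lt (hgr : g ∣ ri) (hgx : g ∣ x) (hx : x < ri) : x + g ≤ ri := by
  have : g ≤ ri - x := Nat.le_of_dvd (by omega) (Nat.dvd_sub hgr hgx)
  omega

theorem beadStep_dvd_and_le (hgri : g ∣ ri) (hgrj : g ∣ rj) (hgx : g ∣ x)
    (hx : x ≤ ri + rj - g) :
    g ∣ beadStep ri rj x ∧ beadStep ri rj x ≤ ri + rj - g := by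
  unfold beadStep
  split_ifs with h
  · exact ⟨Nat.dvd_sub hgx hgri, by omega⟩
  · have := add_le_of_dvd_of_lt hgri hgx (not_le.mp h)
    exact ⟨Nat.dvd_add hgx hgrj, by omega⟩

theorem xor_le_sub_of_dvd (hrj : 0 < rj) (hgri : g ∣ ri) (hgrj : g ∣ rj) (hgx : g ∣ x) :
    Xor (ri ≤ x) (rj ≤ ri + rj - g - x) := by
  have hg : 0 < g := Nat.pos_of_dvd_of_pos hgrj hrj
  have hgle : g ≤ rj := Nat.le_of_dvd hrj hgrj
  rcases le_or_gt ri x with h | h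
  · exact Or.inl ⟨h, by omega⟩
  · have := add_le_of_dvd_of_lt hgri hgx h
    exact Or.inr ⟨by omega, by omega⟩

theorem beadStep_add_mul_ite (ri rj x : ℕ) :
    beadStep ri rj x + (ri + rj) * (if ri ≤ x then 1 else 0) = x + rj := by
  unfold beadStep
  split_ifs <;> omega

end BeadStep

theorem ncard_sep_Ico {α : Type*} [Preorder α] [LocallyFiniteOrder α] (a b : α) (p : α → Prop)
    [DecidablePred p] : {t ∈ Set.Ico a b | p t}.ncard = #{t ∈ Ico a b | p t} := by
  rw [← Set.ncard_coe_finset, coe_filter]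
  simp only [mem_Ico, Set.mem_Ico]

section Orbit

variable {ri rj : ℕ} {a : ℕ → ℕ} (hrec : ∀ s, a (s + 1) = beadStep ri rj (a s))
include hrec

theorem dvd_and_le_of_beadStep {g : ℕ} (hgri : g ∣ ri) (hgrj : g ∣ rj) (h0div : g ∣ a 0)
    (h0le : a 0 ≤ ri + rj - g) (s : ℕ) : g ∣ a s ∧ a s ≤ ri + rj - g := by
  induction s with
  | zero => exact ⟨h0div, h0le⟩
  | succ s ih => rw [hrec s]; exact beadStep_dvd_and_le hgri hgrj ih.1 ih.2

theorem add_mul_card_filter_Ico (s n : ℕ) :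
    a (s + n) + (ri + rj) * #{t ∈ Ico s (s + n) | ri ≤ a t} = a s + n * rj := by
  induction n with
  | zero => simp
  | succ n ih =>
    have hstep := beadStep_add_mul_ite ri rj (a (s + n))
    rw [← add_assoc, hrec, card_filter, sum_Ico_succ_top (by omega), ← card_filter, mul_add]
    linarith

theorem add_eq_of_mul_eq {s n m : ℕ} (hnm : n * rj = (ri + rj) * m) (hs : a s < ri + rj)
    (hsn : a (s + n) < ri + rj) : a (s + n) = a s := by
  have h := add_mul_card_filter_Ico hrec s n
  rw [hnm] at h
  have hmod := congrArg (· % (ri + rj)) h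
  simpa only [Nat.add_mul_mod_self_left, Nat.mod_eq_of_lt hs, Nat.mod_eq_of_lt hsn] using hmod

theorem card_filter_Ico_eq_of_mul_eq {s n m : ℕ} (hnm : n * rj = (ri + rj) * m)
    (hs : a s < ri + rj) (hsn : a (s + n) < ri + rj) :
    #{t ∈ Ico s (s + n) | ri ≤ a t} = m := by
  have h := add_mul_card_filter_Ico hrec s n
  rw [hnm, add_eq_of_mul_eq hrec hnm hs hsn] at h
  exact Nat.eq_of_mul_eq_mul_left (by omega) (Nat.add_left_cancel h)

end Orbit

theorem single_edge_bead_reversal_general (ri rj : ℕ) (hrj : 0 < rj)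
    (a : ℕ → ℕ)
    (h0div : Nat.gcd ri rj ∣ a 0) (h0le : a 0 ≤ ri + rj - Nat.gcd ri rj)
    (hrec : ∀ s, a (s + 1) = if ri ≤ a s then a s - ri else a s + rj) :
    (∀ s, a s ≤ ri + rj - Nat.gcd ri rj ∧
        Xor' (ri ≤ a s) (rj ≤ ri + rj - Nat.gcd ri rj - a s)) ∧
      (∀ s, a (s + (ri + rj) / Nat.gcd ri rj) = a s) ∧
      ∀ s, {t ∈ Set.Ico s (s + (ri + rj) / Nat.gcd ri rj) | ri ≤ a t}.ncard
            = rj / Nat.gcd ri rj ∧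
          {t ∈ Set.Ico s (s + (ri + rj) / Nat.gcd ri rj) |
              rj ≤ ri + rj - Nat.gcd ri rj - a t}.ncard
            = ri / Nat.gcd ri rj := by
  set g := Nat.gcd ri rj
  set n := (ri + rj) / g
  have hgri : g ∣ ri := Nat.gcd_dvd_left ri rj
  have hgrj : g ∣ rj := Nat.gcd_dvd_right ri rj
  have hinv := dvd_and_le_of_beadStep hrec hgri hgrj h0div h0le
  have hxor s := xor_le_sub_of_dvd hrj hgri hgrj (hinv s).1
  have hlt s : a s < ri + rj := by
    have := (hinv s).2
    have : 0 < g := Nat.gcd_pos_of_pos_right ri hrj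
    omega
  have hn : n * rj = (ri + rj) * (rj / g) := by
    rw [Nat.div_mul_right_comm (dvd_add hgri hgrj), Nat.mul_div_assoc _ hgrj]
  refine ⟨fun s => ⟨(hinv s).2, hxor s⟩, fun s => add_eq_of_mul_eq hrec hn (hlt s) (hlt _),
    fun s => ?_⟩
  have hfwd := card_filter_Ico_eq_of_mul_eq hrec hn (hlt s) (hlt _)
  have hbwd := card_filter_add_card_filter_not (s := Ico s (s + n)) (fun t => ri ≤ a t)
  have hbwd_set : {t ∈ Ico s (s + n) | ¬ri ≤ a t} = {t ∈ Ico s (s + n) | rj ≤ ri + rj - g - a t} :=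
    filter_congr fun t _ => (xor_iff_iff_not.mp (hxor t).symm).symm
  have hsplit : n = ri / g + rj / g := Nat.add_div_of_dvd_right hgri
  rw [hfwd, Nat.card_Ico, Nat.add_sub_cancel_left, hbwd_set] at hbwd
  rw [ncard_sep_Ico, ncard_sep_Ico]
  omega

/-- Bead reversal on a single edge between `P_i` and `P_j`, under heavy load:
with `g = gcd(r_i, r_j)` and `e = r_i + r_j − g` beads on the edge, `a s` of which sit
at `P_i`'s end at step `s`, starting from a multiple of `g` and moving `r_i` beads to
`P_j` whenever `a s ≥ r_i` (else `P_j` sends `r_j` beads back):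
(i) at each step exactly one of `a s ≥ r_i` and `e − a s ≥ r_j` holds
(deadlock-freedom), and
(ii) the sequence is periodic with period `(r_i + r_j)/g`, and among any
`(r_i + r_j)/g` consecutive steps, `a t ≥ r_i` holds exactly `r_j/g` times and
`e − a t ≥ r_j` holds exactly `r_i/g` times (ratio-compliance). -/
theorem single_edge_bead_reversal (ri rj : ℕ) (hri : 0 < ri) (hrj : 0 < rj)
    (a : ℕ → ℕ)
    (h0div : Nat.gcd ri rj ∣ a 0) (h0le : a 0 ≤ ri + rj - Nat.gcd ri rj)
    (hrec : ∀ s, a (s + 1) = if ri ≤ a s then a s - ri else a s + rj) :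
    (∀ s, a s ≤ ri + rj - Nat.gcd ri rj ∧
        Xor' (ri ≤ a s) (rj ≤ ri + rj - Nat.gcd ri rj - a s)) ∧
      (∀ s, a (s + (ri + rj) / Nat.gcd ri rj) = a s) ∧
      ∀ s, {t ∈ Set.Ico s (s + (ri + rj) / Nat.gcd ri rj) | ri ≤ a t}.ncard
            = rj / Nat.gcd ri rj ∧
          {t ∈ Set.Ico s (s + (ri + rj) / Nat.gcd ri rj) |
              rj ≤ ri + rj - Nat.gcd ri rj - a t}.ncard
            = ri / Nat.gcd ri rj :=
  single_edge_bead_reversal_general ri rj hrj a h0div h0le hrec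
end

section
/- Let G be a finite simple graph with a proper vertex coloring γ using colors {0, …, c−1}, and let ω0 be the orientation of G that directs each edge from its endpoint of larger color to its endpoint of smaller color (ω0 is acyclic). Then for every simple cycle κ of G, both c+(κ,ω0) and c−(κ,ω0) are at least |κ|/c; that is, min(c+(κ,ω0), c−(κ,ω0)) ≥ |κ|/c. (Combined with the formula Conc(ω0) = min_κ min(c+(κ,ω0), c−(κ,ω0))/|κ|, this yields the inequality χ̄(G) ≤ χ(G) between the interleaved multichromatic number and the chromatic number of G.) -/
/-!
Along an edge `u → w` the colour changes by at most `c - 1` if it rises and by at least `1`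
if it falls, so summing over a walk from `u` to `v` gives
`γ v - γ u ≤ c · #ascents - length`. On a closed walk the left side vanishes, hence
`length ≤ c · #ascents`; reversing the order of the colours turns ascents into descents.
Acyclicity holds because the colour strictly decreases along every arc of `ω0`.
-/

variable {V : Type*}

lemma Fin.sub_le_mul_ite_sub_one {c : ℕ} {a b : Fin c} (hab : a ≠ b) :
    ((b : ℕ) : ℤ) - (a : ℕ) ≤ c * (if a < b then 1 else 0) - 1 := by
  have hab' : (a : ℕ) ≠ b := Fin.val_ne_of_ne hab
  have hb : (b : ℕ) < c := b.isLt
  split_ifs with h <;> rw [Fin.lt_def] at h <;> omega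

namespace SimpleGraph.Walk

variable {G : SimpleGraph V} {c : ℕ} {γ : V → Fin c}

lemma color_sub_le_mul_countP_sub_length (hγ : ∀ u v, G.Adj u v → γ u ≠ γ v)
    {u v : V} (p : G.Walk u v) :
    ((γ v : ℕ) : ℤ) - (γ u : ℕ) ≤
      c * p.darts.countP (fun d => decide (γ d.toProd.1 < γ d.toProd.2)) - p.length := by
  induction p with
  | nil => simp
  | @cons u w v huw p ih =>
    have hstep := Fin.sub_le_mul_ite_sub_one (hγ u w huw)
    simp only [darts_cons, List.countP_cons, length_cons, decide_eq_true_eq] at ih ⊢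
    push_cast
    linarith

lemma length_le_mul_countP_of_closed (hγ : ∀ u v, G.Adj u v → γ u ≠ γ v)
    {u : V} (p : G.Walk u u) :
    p.length ≤ c * p.darts.countP (fun d => decide (γ d.toProd.1 < γ d.toProd.2)) := by
  have := p.color_sub_le_mul_countP_sub_length hγ
  omega

end SimpleGraph.Walk

theorem coloring_orientation_cycle_bound_general
    (G : SimpleGraph V) (c : ℕ) (γ : V → Fin c)
    (hγ : ∀ u v, G.Adj u v → γ u ≠ γ v)
    (ω0 : V → V → Prop)
    (hω0 : ∀ u v, ω0 u v ↔ G.Adj u v ∧ γ v < γ u) :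
    (∀ v, ¬ Relation.TransGen ω0 v v) ∧
      ∀ (w : V) (κ : G.Walk w w), κ.IsCycle →
        (κ.length : ℚ) / (c : ℚ) ≤
          min ((κ.darts.countP (fun d => decide (γ d.toProd.2 < γ d.toProd.1))) : ℚ)
            ((κ.darts.countP (fun d => decide (γ d.toProd.1 < γ d.toProd.2))) : ℚ) := by
  refine ⟨fun v hv => ?_, fun w κ _ => ?_⟩
  · have hdesc : Relation.TransGen ω0 ≤ Function.onFun (· > ·) γ := by
      simpa only [Relation.transGen_eq_self] using
        Relation.TransGen.lift (p := (· > ·)) γ fun u v h => ((hω0 u v).1 h).2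
    exact lt_irrefl _ (hdesc v v hv)
  have hc : (0 : ℚ) < c := by exact_mod_cast (γ w).pos
  have hascents := κ.length_le_mul_countP_of_closed hγ
  have hdescents := κ.length_le_mul_countP_of_closed (γ := Fin.rev ∘ γ)
    fun u v huv => Fin.rev_injective.ne (hγ u v huv)
  simp only [Function.comp_apply, Fin.rev_lt_rev] at hdescents
  refine le_min ?_ ?_ <;> rw [div_le_iff₀ hc, mul_comm]
  · exact_mod_cast hdescents
  · exact_mod_cast hascents

/-- Given a proper coloring `γ` of the finite simple graph `G` with colors
`{0, …, c − 1}`, the orientation `ω0` directing each edge from its endpoint of larger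
color to its endpoint of smaller color is acyclic, and for every simple cycle `κ` of
`G` both `c⁺(κ, ω0)` and `c⁻(κ, ω0)` (the numbers of edges of `κ` oriented along each
of the two traversal directions) are at least `|κ| / c`; that is,
`min (c⁺(κ, ω0)) (c⁻(κ, ω0)) ≥ |κ| / c`. (Combined with the concurrency formula, this
yields `χ̄(G) ≤ χ(G)`.) -/
theorem coloring_orientation_cycle_bound [Fintype V]
    (G : SimpleGraph V) (c : ℕ) (γ : V → Fin c)
    (hγ : ∀ u v, G.Adj u v → γ u ≠ γ v)
    (ω0 : V → V → Prop)
    (hω0 : ∀ u v, ω0 u v ↔ G.Adj u v ∧ γ v < γ u) :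
    (∀ v, ¬ Relation.TransGen ω0 v v) ∧
      ∀ (w : V) (κ : G.Walk w w), κ.IsCycle →
        (κ.length : ℚ) / (c : ℚ) ≤
          min ((κ.darts.countP (fun d => decide (γ d.toProd.2 < γ d.toProd.1))) : ℚ)
            ((κ.darts.countP (fun d => decide (γ d.toProd.1 < γ d.toProd.2))) : ℚ) :=
  coloring_orientation_cycle_bound_general G c γ hγ ω0 hω0
end
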